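/- arXiv:1610.06634 — 6 statements merged into one kernel-verified Lean document; each statement's English description precedes it below -/
import Mathlib

section
/- Let v be a valuation on a field K with formally real residue field. For any sum of squares c ∈ K×, the value v(c) is divisible by 2 in the value group. -/
/-!
Let `a i` have maximal value. Dividing by `a i ^ 2` writes `∑ a j ^ 2 = a i ^ 2 * (1 + ∑ b j ^ 2)`
with every `b j` integral. If `1 + ∑ b j ^ 2` were not a unit of the valuation ring, its residue
would vanish and `-1` would be a sum of squares in the residue field. Hence `v (1 + ∑ b j ^ 2) = 1`
and `v (∑ a j ^ 2) = v (a i) ^ 2`.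
-/

open IsLocalRing Finset

theorem IsSumSq.map {R S F : Type*} [NonAssocSemiring R] [NonAssocSemiring S] [FunLike F R S]
    [RingHomClass F R S] (f : F) {x : R} (hx : IsSumSq x) : IsSumSq (f x) := by
  induction hx with
  | zero => simp
  | sq_add a _ ih => simpa only [map_add, map_mul] using ih.sq_add (f a)

theorem IsSumSq.exists_eq_sum_sq {R : Type*} [CommSemiring R] {x : R} (hx : IsSumSq x) :
    ∃ (n : ℕ) (a : Fin n → R), x = ∑ i, a i ^ 2 := by
  induction hx with
  | zero => exact ⟨0, Fin.elim0, by simp⟩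
  | sq_add b _ ih =>
    obtain ⟨n, a, rfl⟩ := ih
    exact ⟨n + 1, Fin.cons b a, by simp [Fin.sum_univ_succ, sq]⟩

theorem IsLocalRing.isUnit_one_add_of_isSumSq {R : Type*} [CommRing R] [IsLocalRing R]
    (hres : ¬ IsSumSq (-1 : ResidueField R)) {x : R} (hx : IsSumSq x) : IsUnit (1 + x) := by
  by_contra h
  have hzero : residue R (1 + x) = 0 := (residue_eq_zero_iff _).mpr h
  rw [map_add, map_one] at hzero
  exact hres (eq_neg_of_add_eq_zero_right hzero ▸ hx.map (residue R))

namespace Valuation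

variable {K Γ₀ : Type*} [Field K] [LinearOrderedCommGroupWithZero Γ₀] (v : Valuation K Γ₀)

theorem map_one_add_sum_sq (hres : ¬ IsSumSq (-1 : ResidueField v.valuationSubring))
    {ι : Type*} (s : Finset ι) (b : ι → K) (hb : ∀ i ∈ s, v (b i) ≤ 1) :
    v (1 + ∑ i ∈ s, b i ^ 2) = 1 := by
  let y : v.valuationSubring := ∑ i ∈ s.attach, ⟨b i, hb i i.2⟩ ^ 2
  have hy : (y : K) = ∑ i ∈ s, b i ^ 2 := by
    push_cast [y]
    exact sum_attach s (fun i => b i ^ 2)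
  have hunit : IsUnit (1 + y) := isUnit_one_add_of_isSumSq hres (IsSumSq.sum_sq _ _)
  rw [← hy]
  -- `v.valuationSubring` and `v.integer` have the same underlying subring
  exact (integer.integers v).isUnit_iff_valuation_eq_one.mp hunit

theorem map_sum_sq_of_forall_le (hres : ¬ IsSumSq (-1 : ResidueField v.valuationSubring))
    {ι : Type*} {s : Finset ι} {a : ι → K} {i : ι} (hi : i ∈ s)
    (hmax : ∀ j ∈ s, v (a j) ≤ v (a i)) :
    v (∑ j ∈ s, a j ^ 2) = v (a i) ^ 2 := by
  by_cases hai : a i = 0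
  · have hzero : ∀ j ∈ s, a j = 0 := fun j hj => v.zero_iff.mp <| le_zero_iff.mp <| by
      simpa [hai] using hmax j hj
    rw [sum_eq_zero fun j hj => by simp [hzero j hj], hai]
    simp
  classical
  have hdecomp : ∑ j ∈ s, a j ^ 2 = a i ^ 2 * (1 + ∑ j ∈ s.erase i, (a j / a i) ^ 2) := by
    rw [← add_sum_erase s _ hi, mul_add, mul_one, mul_sum]
    congr 1
    exact sum_congr rfl fun j _ => by field_simp
  rw [hdecomp, map_mul, map_pow, v.map_one_add_sum_sq hres, mul_one]
  intro j hj
  rw [map_div₀]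
  exact div_le_one_of_le₀ (hmax j (mem_of_mem_erase hj)) zero_le

theorem exists_map_sum_sq_eq_sq (hres : ¬ IsSumSq (-1 : ResidueField v.valuationSubring))
    {ι : Type*} {s : Finset ι} (a : ι → K) (hs : s.Nonempty) :
    ∃ i ∈ s, (∀ j ∈ s, v (a j) ≤ v (a i)) ∧ v (∑ j ∈ s, a j ^ 2) = v (a i) ^ 2 := by
  obtain ⟨i, hi, hmax⟩ := s.exists_max_image (fun j => v (a j)) hs
  exact ⟨i, hi, hmax, v.map_sum_sq_of_forall_le hres hi hmax⟩

end Valuation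

/-- If `v` is a valuation on a field `K` whose residue field is formally real,
then the value of any nonzero sum of squares `c ∈ K` is divisible by `2` in the
value group; in fact `v(c) = 2·minᵢ v(aᵢ)` for any representation
`c = a₁² + ⋯ + a_k²` (stated multiplicatively: `v c` is a square, equal to the
square of the maximal value `v (aᵢ)`). -/
theorem valuation_sum_of_squares_even
    {K Γ₀ : Type} [Field K] [LinearOrderedCommGroupWithZero Γ₀]
    (v : Valuation K Γ₀)
    (hres : ¬ IsSumSq (-1 : IsLocalRing.ResidueField v.valuationSubring))
    {c : K} (hc : c ≠ 0) (hsum : IsSumSq c) :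
    (∃ γ : Γ₀, v c = γ ^ 2) ∧
    ∀ (ι : Type) (s : Finset ι) (a : ι → K), c = ∑ i ∈ s, a i ^ 2 →
      ∃ i ∈ s, (∀ j ∈ s, v (a j) ≤ v (a i)) ∧ v c = v (a i) ^ 2 := by
  have hrep : ∀ (ι : Type) (s : Finset ι) (a : ι → K), c = ∑ i ∈ s, a i ^ 2 →
      ∃ i ∈ s, (∀ j ∈ s, v (a j) ≤ v (a i)) ∧ v c = v (a i) ^ 2 := by
    rintro ι s a rfl
    exact v.exists_map_sum_sq_eq_sq hres a (nonempty_of_sum_ne_zero hc)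
  obtain ⟨n, a, ha⟩ := hsum.exists_eq_sum_sq
  obtain ⟨i, -, -, hi⟩ := hrep _ _ a ha
  exact ⟨⟨v (a i), hi⟩, hrep⟩
end

section
/- Let B|A be a finite extension of integral domains whose fraction field extension L|K is separable, let c ∈ L×, and let I be an A-submodule of L spanning L over K. Define β(a,b) = Tr_{L|K}(abc). Then β restricts to a unimodular A-bilinear form on I if and only if c·I equals the complementary module I' = { x ∈ L : Tr_{L|K}(x·I) ⊆ A }. -/
/-!
The trace pairing identifies the complementary module `I'` with `Hom_A(I, A)`. It is injective
because the trace form is nondegenerate and `I` spans `L`. It is surjective because `I` spans `L`,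
so `L` is the localization of `I` at `A ∖ {0}`: every `A`-linear functional on `I` extends to a
`K`-linear functional on `L`, which the nondegenerate trace form represents by an element of `L`.
Under this identification `β` becomes multiplication by `c`, an injective map `I → I'`
(defined as soon as `c • I ⊆ I'`), so `β` is unimodular exactly when `c • I = I'`.
-/

open LinearMap (BilinForm)
open nonZeroDivisors

section Localization

variable {A K M : Type*} [CommRing A] [CommRing K] [Algebra A K] [AddCommGroup M] [Module A M]
  [Module K M] [IsScalarTower A K M] {N : Submodule A M}

theorem Submodule.exists_smul_mem_of_span_eq_top (S : Submonoid A) [IsLocalization S K]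
    (hN : span K (N : Set M) = ⊤) (x : M) : ∃ s : S, s • x ∈ N := by
  have := isLocalizedModule_id S M K
  have hx : x ∈ N.localized' K S LinearMap.id := by simp [localized'_eq_span, hN]
  obtain ⟨m, hm, s, hsm⟩ := hx
  refine ⟨s, ?_⟩
  rw [← hsm, IsLocalizedModule.mk'_cancel']
  simpa using hm

theorem Submodule.isLocalizedModule_subtype_of_span_eq_top (S : Submonoid A) [IsLocalization S K]
    (hN : span K (N : Set M) = ⊤) : IsLocalizedModule S N.subtype where
  map_units := (isLocalizedModule_id S M K).map_units
  surj x := by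
    obtain ⟨s, hs⟩ := N.exists_smul_mem_of_span_eq_top S hN x
    exact ⟨(⟨_, hs⟩, s), rfl⟩
  exists_of_eq h := ⟨1, by rw [Subtype.ext h]⟩

theorem Submodule.exists_extend_of_span_eq_top (S : Submonoid A) [IsLocalization S K]
    (hN : span K (N : Set M) = ⊤) (f : N →ₗ[A] A) :
    ∃ F : M →ₗ[K] K, ∀ y : N, F y = algebraMap A K (f y) := by
  have := N.isLocalizedModule_subtype_of_span_eq_top S hN
  have hK := (isLocalizedModule_id S K K).map_units
  exact ⟨(IsLocalizedModule.lift S N.subtype (Algebra.linearMap A K ∘ₗ f) hK)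
    |>.extendScalarsOfIsLocalization S K, IsLocalizedModule.lift_apply _ _ _ hK⟩

end Localization

theorem LinearMap.BilinForm.dualSubmoduleToDual_surjective_of_span_eq_top
    {A K M : Type*} [CommRing A] [IsDomain A] [Field K] [Algebra A K] [IsFractionRing A K]
    [AddCommGroup M] [Module A M] [Module K M] [IsScalarTower A K M] [FiniteDimensional K M]
    {B : BilinForm K M} (hB : B.Nondegenerate) {N : Submodule A M}
    (hN : Submodule.span K (N : Set M) = ⊤) : Function.Surjective (B.dualSubmoduleToDual N) := by
  intro f
  obtain ⟨F, hF⟩ := N.exists_extend_of_span_eq_top A⁰ hN f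
  have hz : ∀ y : N, B ((B.toDual hB).symm F) y = algebraMap A K (f y) := by
    simp [apply_toDual_symm_apply, hF]
  refine ⟨⟨_, fun y hy => Submodule.mem_one.mpr ⟨_, (hz ⟨y, hy⟩).symm⟩⟩, ?_⟩
  ext y
  apply FaithfulSMul.algebraMap_injective A K
  simp [hz]

theorem LinearMap.bijective_mulLeft_restrict_iff {A L : Type*} [CommRing A] [Ring L] [IsDomain L]
    [Algebra A L] {c : L} (hc0 : c ≠ 0) {I J : Submodule A L} (hc : ∀ y ∈ I, c * y ∈ J) :
    Function.Bijective ((mulLeft A c).restrict hc) ↔ ∀ x ∈ J, ∃ y ∈ I, c * y = x := by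
  have hinj : Function.Injective ((mulLeft A c).restrict hc) := fun y z hyz =>
    Subtype.ext (mul_left_cancel₀ hc0 (congrArg Subtype.val hyz))
  refine (and_iff_right hinj).trans ⟨fun hsurj x hx => ?_, fun h x => ?_⟩
  · obtain ⟨y, hy⟩ := hsurj ⟨x, hx⟩
    exact ⟨y, y.2, congrArg Subtype.val hy⟩
  · obtain ⟨y, hy, hyx⟩ := h x x.2
    exact ⟨⟨y, hy⟩, Subtype.ext hyx⟩

namespace Algebra

variable {A K L : Type*} [CommRing A] [Field K] [Field L] [Algebra A K] [Algebra K L]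
  [Algebra A L] [IsScalarTower A K L] {I : Submodule A L}

theorem mem_traceForm_dualSubmodule {x : L} :
    x ∈ (traceForm K L).dualSubmodule I ↔
      ∀ y ∈ I, trace K L (x * y) ∈ (algebraMap A K).range := by
  simp only [BilinForm.mem_dualSubmodule, Submodule.mem_one, traceForm_apply, RingHom.mem_range]

theorem algebraMap_traceForm_dualSubmoduleToDual_mulLeft [IsDomain A] [Module.IsTorsionFree A K]
    {c : L} (hc : ∀ y ∈ I, c * y ∈ (traceForm K L).dualSubmodule I) (x y : I) :
    algebraMap A K
        ((traceForm K L).dualSubmoduleToDual I ((LinearMap.mulLeft A c).restrict hc x) y) =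
      trace K L (x * y * c) := by
  rw [BilinForm.dualSubmoduleToDual_apply_apply, BilinForm.dualSubmoduleParing_spec,
    traceForm_apply]
  change trace K L (c * x * y) = _
  rw [mul_comm c, mul_right_comm]

end Algebra

theorem scaled_trace_form_unimodular_iff_general
    {A K L : Type}
    [CommRing A] [IsDomain A]
    [Field K] [Field L] [Algebra A K] [IsFractionRing A K]
    [Algebra K L] [Algebra A L] [IsScalarTower A K L]
    [FiniteDimensional K L] [Algebra.IsSeparable K L]
    (c : L) (hc : c ≠ 0)
    (I : Submodule A L) (hspan : Submodule.span K (I : Set L) = ⊤) :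
    (∃ β₀ : ↥I →ₗ[A] (↥I →ₗ[A] A),
        (∀ x y : ↥I,
          algebraMap A K (β₀ x y) = Algebra.trace K L ((x : L) * (y : L) * c)) ∧
        Function.Bijective β₀) ↔
      ∀ x : L, (∃ y ∈ I, c * y = x) ↔
        ∀ y ∈ I, Algebra.trace K L (x * y) ∈ (algebraMap A K).range := by
  let T := Algebra.traceForm K L
  have hT := traceForm_nondegenerate K L
  have hΦ : Function.Bijective (T.dualSubmoduleToDual I) :=
    ⟨T.dualSubmoduleToDual_injective hT I hspan,
      T.dualSubmoduleToDual_surjective_of_span_eq_top hT hspan⟩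
  simp only [← Algebra.mem_traceForm_dualSubmodule]
  constructor
  · rintro ⟨β₀, hβ₀, hβ₀_bij⟩
    have hle : ∀ y ∈ I, c * y ∈ T.dualSubmodule I := fun y hy z hz =>
      Submodule.mem_one.mpr ⟨β₀ ⟨y, hy⟩ ⟨z, hz⟩, by
        rw [hβ₀, Algebra.traceForm_apply]; ring_nf⟩
    have hβ₀_eq :
        β₀ = T.dualSubmoduleToDual I ∘ₗ (LinearMap.mulLeft A c).restrict hle := by
      ext x y
      apply IsFractionRing.injective A K
      rw [hβ₀, LinearMap.comp_apply, Algebra.algebraMap_traceForm_dualSubmoduleToDual_mulLeft]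
    rw [hβ₀_eq, LinearMap.coe_comp, hΦ.of_comp_iff',
      LinearMap.bijective_mulLeft_restrict_iff hc] at hβ₀_bij
    exact fun x => ⟨fun ⟨y, hy, hyx⟩ => hyx ▸ hle y hy, hβ₀_bij x⟩
  · intro h
    have hle : ∀ y ∈ I, c * y ∈ T.dualSubmodule I := fun y hy => (h _).1 ⟨y, hy, rfl⟩
    refine ⟨T.dualSubmoduleToDual I ∘ₗ (LinearMap.mulLeft A c).restrict hle,
      Algebra.algebraMap_traceForm_dualSubmoduleToDual_mulLeft hle, ?_⟩
    rw [LinearMap.coe_comp, hΦ.of_comp_iff', LinearMap.bijective_mulLeft_restrict_iff hc]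
    exact fun x hx => (h x).2 hx

/-- **Scaled trace forms and the complementary module.**  Let `B|A` be a finite
extension of integral domains with separable fraction field extension `L|K`,
`c ∈ L^×`, and `I` an `A`-submodule of `L` spanning `L` over `K`.  The scaled
trace form `β(a,b) = Tr_{L|K}(abc)` restricts to a unimodular `A`-bilinear form
on `I` (i.e. it takes values in `A` on `I × I` and the induced map
`I → Hom_A(I,A)` is bijective) if and only if `c·I` equals the complementary
module `I' = {x ∈ L : Tr_{L|K}(x·I) ⊆ A}`. -/
theorem scaled_trace_form_unimodular_iff
    {A B K L : Type}
    [CommRing A] [IsDomain A] [CommRing B] [IsDomain B]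
    [Field K] [Field L] [Algebra A K] [IsFractionRing A K]
    [Algebra B L] [IsFractionRing B L]
    [Algebra A B] [Module.Finite A B]
    [Algebra K L] [Algebra A L] [IsScalarTower A K L] [IsScalarTower A B L]
    [FiniteDimensional K L] [Algebra.IsSeparable K L]
    (c : L) (hc : c ≠ 0)
    (I : Submodule A L) (hspan : Submodule.span K (I : Set L) = ⊤) :
    (∃ β₀ : ↥I →ₗ[A] (↥I →ₗ[A] A),
        (∀ x y : ↥I,
          algebraMap A K (β₀ x y) = Algebra.trace K L ((x : L) * (y : L) * c)) ∧
        Function.Bijective β₀) ↔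
      ∀ x : L, (∃ y ∈ I, c * y = x) ↔
        ∀ y ∈ I, Algebra.trace K L (x * y) ∈ (algebraMap A K).range :=
  scaled_trace_form_unimodular_iff_general c hc I hspan
end

section
/- Let B|A be a finite extension of Dedekind domains with separable fraction field extension L|K, c ∈ L×, and I a nonzero fractional B-ideal. The scaled trace form β(a,b) = Tr_{L|K}(abc) restricts to a unimodular A-bilinear form on I if and only if c·I² = Δ(B|A), the codifferent of B over A. -/
/-!
An `A`-bilinear form on the full `A`-lattice `I ⊆ L` that comes from a nondegenerate `K`-bilinear
form `β` on `L` is unimodular exactly when `I` is its own `β`-dual: every `A`-linear functional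
on `I` extends `K`-linearly to `L` and is therefore represented by a unique element of `L`, which
lies in the `β`-dual of `I`. For `β(x, y) = Tr(x y c)` the `β`-dual of `I` is the trace dual of
`c I`, namely `Δ(B|A) (c I)⁻¹`, so self-duality means `c I² = Δ(B|A)`.
-/

open nonZeroDivisors

open Submodule in
theorem Submodule.isLocalizedModule_subtype_of_span_eq_top_s12 {R S M : Type*} [CommRing R]
    [CommRing S] [Algebra R S] (p : Submonoid R) [IsLocalization p S] [AddCommGroup M] [Module R M]
    [Module S M] [IsScalarTower R S M] (N : Submodule R M) (hN : span S (N : Set M) = ⊤) :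
    IsLocalizedModule p N.subtype := by
  have := isLocalizedModule_id p M S
  have htop : N.localized' S p LinearMap.id = ⊤ := by
    rw [localized'_eq_span, LinearMap.id_coe, Set.image_id, hN]
  convert IsLocalizedModule.of_linearEquiv p (N.toLocalized' S p LinearMap.id)
    ((LinearEquiv.ofTop _ htop).restrictScalars R)
  ext; rfl

namespace LinearMap.BilinForm

variable {R S M : Type*} [CommRing R] [IsDomain R] [Field S] [Algebra R S] [IsFractionRing R S]
  [AddCommGroup M] [Module R M] [Module S M] [IsScalarTower R S M] [FiniteDimensional S M]
  {B : LinearMap.BilinForm S M}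

theorem dualSubmoduleToDual_surjective (hB : B.Nondegenerate) (N : Submodule R M)
    (hN : Submodule.span S (N : Set M) = ⊤) :
    Function.Surjective (B.dualSubmoduleToDual N) := by
  intro f
  have := N.isLocalizedModule_subtype_of_span_eq_top_s12 R⁰ (S := S) hN
  let F : Module.Dual S M :=
    (IsLocalizedModule.isBaseChange R⁰ S N.subtype).lift (Algebra.linearMap R S ∘ₗ f)
  have hF (y : N) : F y = algebraMap R S (f y) := IsBaseChange.lift_eq _ _ y
  let x := (B.toDual hB).symm F
  have hBx (y : N) : B x y = algebraMap R S (f y) := by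
    rw [apply_toDual_symm_apply, ← hF]
  have hx : x ∈ B.dualSubmodule N := fun y hy ↦ Submodule.mem_one.mpr ⟨_, (hBx ⟨y, hy⟩).symm⟩
  refine ⟨⟨x, hx⟩, LinearMap.ext fun y ↦ FaithfulSMul.algebraMap_injective R S ?_⟩
  simp [hBx]

theorem dualSubmoduleToDual_bijective (hB : B.Nondegenerate) (N : Submodule R M)
    (hN : Submodule.span S (N : Set M) = ⊤) :
    Function.Bijective (B.dualSubmoduleToDual N) :=
  ⟨dualSubmoduleToDual_injective B hB N hN, dualSubmoduleToDual_surjective hB N hN⟩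

theorem exists_bijective_lift_iff_dualSubmodule_eq_self (hB : B.Nondegenerate) (N : Submodule R M)
    (hN : Submodule.span S (N : Set M) = ⊤) :
    (∃ β : N →ₗ[R] N →ₗ[R] R, (∀ x y : N, algebraMap R S (β x y) = B x y) ∧
      Function.Bijective β) ↔ B.dualSubmodule N = N := by
  constructor
  · rintro ⟨β, hβ, hβ_bij⟩
    have hle : N ≤ B.dualSubmodule N := fun x hx y hy ↦
      Submodule.mem_one.mpr ⟨β ⟨x, hx⟩ ⟨y, hy⟩, hβ _ _⟩
    refine le_antisymm (fun z hz ↦ ?_) hle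
    obtain ⟨w, hw⟩ := hβ_bij.2 (B.dualSubmoduleToDual N ⟨z, hz⟩)
    have : B.dualSubmoduleToDual N ⟨w, hle w.2⟩ = B.dualSubmoduleToDual N ⟨z, hz⟩ := by
      rw [← hw]
      ext y
      apply FaithfulSMul.algebraMap_injective R S
      simp [hβ]
    have hwz : (w : M) = z := congrArg Subtype.val (dualSubmoduleToDual_injective B hB N hN this)
    exact hwz ▸ w.2
  · intro h
    refine ⟨B.dualSubmoduleToDual N ∘ₗ (LinearEquiv.ofEq _ _ h.symm).toLinearMap,
      fun x y ↦ by simp, ?_⟩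
    exact (dualSubmoduleToDual_bijective hB N hN).comp (LinearEquiv.ofEq _ _ h.symm).bijective

end LinearMap.BilinForm

namespace Algebra

section CommRing

variable (K L : Type*) [CommRing K] [CommRing L] [Algebra K L]

noncomputable def scaledTraceForm (c : L) : LinearMap.BilinForm K L :=
  (traceForm K L).compLeft (LinearMap.mulRight K c)

variable {K L}

@[simp]
theorem scaledTraceForm_apply (c x y : L) : scaledTraceForm K L c x y = trace K L (x * y * c) := by
  rw [scaledTraceForm, LinearMap.BilinForm.compLeft_apply, LinearMap.mulRight_apply,
    traceForm_apply, mul_right_comm]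

end CommRing

variable {K L : Type*} [Field K] [Field L] [Algebra K L]

theorem scaledTraceForm_nondegenerate [FiniteDimensional K L] [Algebra.IsSeparable K L] {c : L}
    (hc : c ≠ 0) : (scaledTraceForm K L c).Nondegenerate := by
  refine .ofSeparatingLeft fun x hx ↦ ?_
  have hxc : x * c = 0 := (traceForm_nondegenerate K L).1 _ fun y ↦ by
    simpa [mul_right_comm] using hx y
  exact (mul_eq_zero.mp hxc).resolve_right hc

end Algebra

namespace FractionalIdeal

variable {A K L B : Type*} [CommRing A] [Field K] [CommRing B] [Field L] [Algebra A K]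
  [Algebra B L] [Algebra A B] [Algebra K L] [Algebra A L] [IsScalarTower A K L]
  [IsScalarTower A B L]

theorem span_restrictScalars_eq_top [IsLocalization (Algebra.algebraMapSubmonoid B A⁰) L]
    {I : FractionalIdeal B⁰ L} (hI : I ≠ 0) :
    Submodule.span K (((I : Submodule B L).restrictScalars A : Submodule A L) : Set L) = ⊤ := by
  obtain ⟨x, hxI, hx0⟩ : ∃ x ∈ I, x ≠ 0 := by
    by_contra! h
    exact hI (eq_zero_iff.mpr h)
  refine Submodule.eq_top_iff'.mpr fun z ↦ ?_
  obtain ⟨⟨b, _, a, ha, rfl⟩, hbs⟩ :=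
    IsLocalization.surj (Algebra.algebraMapSubmonoid B A⁰) (z * x⁻¹)
  have ha0 : algebraMap A L a ≠ 0 := by
    rw [IsScalarTower.algebraMap_apply A B L]
    exact (IsLocalization.map_units L (⟨_, a, ha, rfl⟩ : Algebra.algebraMapSubmonoid B A⁰)).ne_zero
  have hz : z = (algebraMap A K a)⁻¹ • (b • x) := by
    rw [Algebra.smul_def, map_inv₀, ← IsScalarTower.algebraMap_apply, Algebra.smul_def,
      eq_inv_mul_iff_mul_eq₀ ha0, ← hbs, ← IsScalarTower.algebraMap_apply]
    field_simp
  rw [hz]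
  exact Submodule.smul_mem _ _ (Submodule.subset_span (Submodule.smul_mem _ b hxI))

variable [IsDomain A] [IsFractionRing A K] [IsIntegrallyClosed A] [FiniteDimensional K L]
  [Algebra.IsSeparable K L] [IsDedekindDomain B] [IsFractionRing B L] [IsIntegralClosure B A L]

theorem mem_dual_one_iff {x : L} :
    x ∈ dual A K (1 : FractionalIdeal B⁰ L) ↔
      ∀ b : B, Algebra.trace K L (x * algebraMap B L b) ∈ (algebraMap A K).range := by
  rw [mem_dual (one_ne_zero : (1 : FractionalIdeal B⁰ L) ≠ 0)]
  simp [mem_one_iff]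

theorem dualSubmodule_scaledTraceForm {c : L} (hc : c ≠ 0) {I : FractionalIdeal B⁰ L} (hI : I ≠ 0) :
    (Algebra.scaledTraceForm K L c).dualSubmodule ((I : Submodule B L).restrictScalars A) =
      (dual A K (spanSingleton B⁰ c * I) : Submodule B L).restrictScalars A := by
  have hcI : spanSingleton B⁰ c * I ≠ 0 := mul_ne_zero (spanSingleton_ne_zero_iff.mpr hc) hI
  ext x
  simp only [LinearMap.BilinForm.mem_dualSubmodule, Submodule.restrictScalars_mem, mem_coe,
    Algebra.scaledTraceForm_apply, Submodule.mem_one, mem_dual hcI, mem_singleton_mul,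
    Algebra.traceForm_apply, RingHom.mem_range, forall_exists_index, and_imp]
  rw [forall_comm]
  simp [mul_comm c, mul_assoc]

theorem dualSubmodule_scaledTraceForm_eq_self_iff {c : L} (hc : c ≠ 0) {I : FractionalIdeal B⁰ L}
    (hI : I ≠ 0) :
    (Algebra.scaledTraceForm K L c).dualSubmodule ((I : Submodule B L).restrictScalars A) =
      (I : Submodule B L).restrictScalars A ↔ spanSingleton B⁰ c * I ^ 2 = dual A K 1 := by
  have hcI : spanSingleton B⁰ c * I ≠ 0 := mul_ne_zero (spanSingleton_ne_zero_iff.mpr hc) hI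
  rw [dualSubmodule_scaledTraceForm hc hI, Submodule.restrictScalars_inj, coeToSubmodule_inj,
    dual_eq_mul_inv, ← div_eq_mul_inv, div_eq_iff hcI, eq_comm]
  ring_nf

end FractionalIdeal

theorem scaled_trace_form_unimodular_iff_codifferent_general
    {A B K L : Type}
    [CommRing A] [IsDedekindDomain A]
    [CommRing B] [IsDedekindDomain B]
    [Field K] [Field L] [Algebra A K] [IsFractionRing A K]
    [Algebra B L] [IsFractionRing B L]
    [Algebra A B] [Module.Finite A B]
    [Algebra K L] [Algebra A L] [IsScalarTower A K L] [IsScalarTower A B L]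
    [FiniteDimensional K L] [Algebra.IsSeparable K L]
    (c : L) (hc : c ≠ 0)
    (I : FractionalIdeal B⁰ L) (hI : I ≠ 0) :
    (∃ β₀ : ↥(I : Submodule B L) →ₗ[A] (↥(I : Submodule B L) →ₗ[A] A),
        (∀ x y : ↥(I : Submodule B L),
          algebraMap A K (β₀ x y) = Algebra.trace K L ((x : L) * (y : L) * c)) ∧
        Function.Bijective β₀) ↔
      ∀ x : L,
        x ∈ (FractionalIdeal.spanSingleton B⁰ c * I ^ 2 : FractionalIdeal B⁰ L) ↔
        ∀ b : B, Algebra.trace K L (x * algebraMap B L b) ∈ (algebraMap A K).range := by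
  have : Algebra.IsIntegral A B := Algebra.IsIntegral.of_finite A B
  have : IsIntegrallyClosedIn B L := IsIntegrallyClosedIn.of_isIntegralClosure (R := B)
  have : IsIntegralClosure B A L := IsIntegralClosure.of_isIntegrallyClosedIn
  have := IsIntegralClosure.isLocalization A K L B
  have hcodifferent : (∀ x : L, x ∈ FractionalIdeal.spanSingleton B⁰ c * I ^ 2 ↔
      ∀ b : B, Algebra.trace K L (x * algebraMap B L b) ∈ (algebraMap A K).range) ↔
      FractionalIdeal.spanSingleton B⁰ c * I ^ 2 = FractionalIdeal.dual A K 1 := by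
    simp only [SetLike.ext_iff, FractionalIdeal.mem_dual_one_iff]
  rw [hcodifferent, ← FractionalIdeal.dualSubmodule_scaledTraceForm_eq_self_iff hc hI]
  have hself_dual := LinearMap.BilinForm.exists_bijective_lift_iff_dualSubmodule_eq_self
    (Algebra.scaledTraceForm_nondegenerate (K := K) hc) ((I : Submodule B L).restrictScalars A)
    (FractionalIdeal.span_restrictScalars_eq_top hI)
  simp only [Algebra.scaledTraceForm_apply] at hself_dual
  exact hself_dual

/-- **Unimodular scaled trace forms on fractional ideals over Dedekind domains.**
Let `B|A` be a finite extension of Dedekind domains with separable fraction field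
extension `L|K`, `c ∈ L^×` and `I` a nonzero fractional `B`-ideal.  The scaled
trace form `β(a,b) = Tr_{L|K}(abc)` restricts to a unimodular `A`-bilinear form
on `I` if and only if `c·I² = Δ(B|A)`, the codifferent
`{x ∈ L : Tr_{L|K}(xB) ⊆ A}` of `B` over `A`. -/
theorem scaled_trace_form_unimodular_iff_codifferent
    {A B K L : Type}
    [CommRing A] [IsDomain A] [IsDedekindDomain A]
    [CommRing B] [IsDomain B] [IsDedekindDomain B]
    [Field K] [Field L] [Algebra A K] [IsFractionRing A K]
    [Algebra B L] [IsFractionRing B L]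
    [Algebra A B] [Module.Finite A B]
    [Algebra K L] [Algebra A L] [IsScalarTower A K L] [IsScalarTower A B L]
    [FiniteDimensional K L] [Algebra.IsSeparable K L]
    (c : L) (hc : c ≠ 0)
    (I : FractionalIdeal B⁰ L) (hI : I ≠ 0) :
    (∃ β₀ : ↥(I : Submodule B L) →ₗ[A] (↥(I : Submodule B L) →ₗ[A] A),
        (∀ x y : ↥(I : Submodule B L),
          algebraMap A K (β₀ x y) = Algebra.trace K L ((x : L) * (y : L) * c)) ∧
        Function.Bijective β₀) ↔
      ∀ x : L,
        x ∈ (FractionalIdeal.spanSingleton B⁰ c * I ^ 2 : FractionalIdeal B⁰ L) ↔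
        ∀ b : B, Algebra.trace K L (x * algebraMap B L b) ∈ (algebraMap A K).range :=
  scaled_trace_form_unimodular_iff_codifferent_general c hc I hI
end

section
/- Let B|A be a finite extension of Dedekind domains with separable fraction field extension, and let 𝔭 be a nonzero prime of A such that every prime 𝔮 of B above 𝔭 is unramified with separable residue field extension k(𝔮)|k(𝔭). Then v_𝔮(Δ(B|A)) = 0 for all primes 𝔮 of B above 𝔭, i.e., no such 𝔮 occurs in the prime factorization of the codifferent. -/
/-!
Write `pB = 𝔮 * 𝔔`, with `𝔔` coprime to `𝔮` because `e(𝔮|𝔭) = 1`. Since `k(𝔮)|k(𝔭)` is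
separable its trace form is nonzero, so by the Chinese remainder theorem some `x ∈ 𝔔` has
`Tr(x) ∉ 𝔭`. Hence `𝔮` does not divide the different `𝔇(B|A) = Δ(B|A)⁻¹`, and
`v_𝔮(Δ) = -v_𝔮(𝔇) = 0`.
-/

open nonZeroDivisors

-- The different-ideal criteria of Mathlib are stated for this algebra `Frac A → Frac B`.
attribute [local instance] FractionRing.liftAlgebra FractionRing.isScalarTower_liftAlgebra

namespace FractionalIdeal

variable {R : Type*} [CommRing R] [IsDedekindDomain R] (K : Type*) [Field K] [Algebra R K]
  [IsFractionRing R K] (v : IsDedekindDomain.HeightOneSpectrum R)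

theorem count_coe_eq_zero_iff {J : Ideal R} (hJ : J ≠ 0) :
    count K v J = 0 ↔ ¬ v.asIdeal ∣ J := by
  rw [count_coe K v hJ, Nat.cast_eq_zero, ← Associates.count_ne_zero_iff_dvd hJ v.irreducible,
    not_not]

end FractionalIdeal

section

variable {A B : Type*} [CommRing A] [IsDedekindDomain A] [CommRing B] [IsDedekindDomain B]
  [Algebra A B] [Module.IsTorsionFree A B] [Module.Finite A B]
  [Algebra.IsSeparable (FractionRing A) (FractionRing B)]

theorem not_dvd_differentIdeal_of_ramificationIdx'_eq_one {p : Ideal A} [p.IsMaximal]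
    (hp : p ≠ ⊥) (P : Ideal B) [P.IsMaximal] [P.LiesOver p]
    [Algebra.IsSeparable (A ⧸ p) (B ⧸ P)] (he : Ideal.ramificationIdx' p P = 1) :
    ¬ P ∣ differentIdeal A B := by
  have hpB : p.map (algebraMap A B) ≠ ⊥ :=
    (Ideal.map_eq_bot_iff_of_injective (FaithfulSMul.algebraMap_injective A B)).not.mpr hp
  have hP : P ≠ ⊥ := Ideal.ne_bot_of_liesOver_of_ne_bot hp P
  obtain ⟨Q, hPQ, hfactor⟩ := Ideal.eq_prime_pow_mul_coprime hpB P
  rw [← Ideal.IsDedekindDomain.ramificationIdx'_eq_normalizedFactors_count hpB inferInstance hP,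
    he, pow_one] at hfactor
  exact not_dvd_differentIdeal_of_isCoprime_of_isSeparable A P Q
    (Ideal.isCoprime_iff_sup_eq.mpr hPQ) hfactor.symm

end

section

variable {A B : Type*} (K L : Type*)
    [CommRing A] [IsDedekindDomain A] [CommRing B] [IsDedekindDomain B]
    [Field K] [Field L] [Algebra A K] [IsFractionRing A K] [Algebra B L] [IsFractionRing B L]
    [Algebra A B] [Algebra K L] [Algebra A L] [IsScalarTower A K L] [IsScalarTower A B L]

theorem isSeparable_fractionRing_of_isSeparable [Module.IsTorsionFree A B]
    [Algebra.IsSeparable K L] : Algebra.IsSeparable (FractionRing A) (FractionRing B) := by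
  refine Algebra.IsSeparable.of_equiv_equiv (FractionRing.algEquiv A K).symm.toRingEquiv
    (FractionRing.algEquiv B L).symm.toRingEquiv ?_
  ext
  exact IsFractionRing.algEquiv_commutes (FractionRing.algEquiv A K).symm
    (FractionRing.algEquiv B L).symm _

theorem count_dual_one_eq_neg_count_differentIdeal [Module.IsTorsionFree A B]
    [IsIntegralClosure B A L] [FiniteDimensional K L] [Algebra.IsSeparable K L]
    (w : IsDedekindDomain.HeightOneSpectrum B) :
    FractionalIdeal.count L w (FractionalIdeal.dual A K (1 : FractionalIdeal B⁰ L)) =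
      -FractionalIdeal.count L w (differentIdeal A B : FractionalIdeal B⁰ L) := by
  rw [coeIdeal_differentIdeal A K L B, FractionalIdeal.count_inv, neg_neg]

end

theorem codifferent_valuation_zero_of_unramified_general
    {A B K L : Type}
    [CommRing A] [IsDedekindDomain A]
    [CommRing B] [IsDedekindDomain B]
    [Field K] [Field L] [Algebra A K] [IsFractionRing A K]
    [Algebra B L] [IsFractionRing B L]
    [Algebra A B] [Module.Finite A B]
    [Algebra K L] [Algebra A L] [IsScalarTower A K L] [IsScalarTower A B L]
    [FiniteDimensional K L] [Algebra.IsSeparable K L]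
    (𝔭 : Ideal A) (h𝔭 : 𝔭.IsPrime) (h𝔭0 : 𝔭 ≠ ⊥)
    (hunram : ∀ 𝔮 : Ideal B, 𝔮.IsPrime → 𝔮.comap (algebraMap A B) = 𝔭 →
      Ideal.ramificationIdx' 𝔭 𝔮 = 1)
    (hsep : ∀ (𝔮 : Ideal B) (_ : 𝔮.IsPrime)
      (hover : 𝔮.comap (algebraMap A B) = 𝔭),
      @Algebra.IsSeparable (A ⧸ 𝔭) (B ⧸ 𝔮) _ _
        (Ideal.Quotient.algebraQuotientOfLEComap (le_of_eq hover.symm))) :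
    ∀ w : IsDedekindDomain.HeightOneSpectrum B,
      w.asIdeal.comap (algebraMap A B) = 𝔭 →
      FractionalIdeal.count L w
        (FractionalIdeal.dual A K (1 : FractionalIdeal B⁰ L)) = 0 := by
  intro w hw
  have : Module.IsTorsionFree A L := .trans_faithfulSMul A K L
  have : Module.IsTorsionFree A B := IsIntegralClosure.isTorsionFree A L
  have := isSeparable_fractionRing_of_isSeparable (A := A) (B := B) K L
  have := h𝔭.isMaximal h𝔭0
  have := w.isMaximal
  have : w.asIdeal.LiesOver 𝔭 := ⟨hw.symm⟩
  have := hsep w.asIdeal w.isPrime hw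
  rw [count_dual_one_eq_neg_count_differentIdeal K L, neg_eq_zero,
    FractionalIdeal.count_coe_eq_zero_iff L w differentIdeal_ne_bot]
  exact not_dvd_differentIdeal_of_ramificationIdx'_eq_one h𝔭0 w.asIdeal
    (hunram w.asIdeal w.isPrime hw)

/-- **Unramified primes do not divide the codifferent.**  Let `B|A` be a finite
extension of Dedekind domains with separable fraction field extension `L|K`
(with `B` the integral closure of `A` in `L`), and let `𝔭` be a nonzero prime of
`A` such that every prime `𝔮` of `B` above `𝔭` is unramified with separable
residue field extension `k(𝔮)|k(𝔭)`.  Then `v_𝔮(Δ(B|A)) = 0` for every prime `𝔮`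
of `B` above `𝔭`, where `Δ(B|A)` is the codifferent fractional ideal. -/
theorem codifferent_valuation_zero_of_unramified
    {A B K L : Type}
    [CommRing A] [IsDomain A] [IsDedekindDomain A]
    [CommRing B] [IsDomain B] [IsDedekindDomain B]
    [Field K] [Field L] [Algebra A K] [IsFractionRing A K]
    [Algebra B L] [IsFractionRing B L]
    [Algebra A B] [Module.Finite A B]
    [Algebra K L] [Algebra A L] [IsScalarTower A K L] [IsScalarTower A B L]
    [IsIntegralClosure B A L]
    [FiniteDimensional K L] [Algebra.IsSeparable K L]
    (𝔭 : Ideal A) (h𝔭 : 𝔭.IsPrime) (h𝔭0 : 𝔭 ≠ ⊥)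
    (hunram : ∀ 𝔮 : Ideal B, 𝔮.IsPrime → 𝔮.comap (algebraMap A B) = 𝔭 →
      Ideal.ramificationIdx' 𝔭 𝔮 = 1)
    (hsep : ∀ (𝔮 : Ideal B) (_ : 𝔮.IsPrime)
      (hover : 𝔮.comap (algebraMap A B) = 𝔭),
      @Algebra.IsSeparable (A ⧸ 𝔭) (B ⧸ 𝔮) _ _
        (Ideal.Quotient.algebraQuotientOfLEComap (le_of_eq hover.symm))) :
    ∀ w : IsDedekindDomain.HeightOneSpectrum B,
      w.asIdeal.comap (algebraMap A B) = 𝔭 →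
      FractionalIdeal.count L w
        (FractionalIdeal.dual A K (1 : FractionalIdeal B⁰ L)) = 0 :=
  codifferent_valuation_zero_of_unramified_general 𝔭 h𝔭 h𝔭0 hunram hsep
end

section
/- Let k be a field of characteristic ≠ 2, M a free k[x]-module of finite rank n, and β a unimodular symmetric bilinear form on M. Then M admits an orthogonal basis q₁,…,q_n with respect to β, and for every orthogonal basis the values β(q_i,q_i) are units, i.e., nonzero constants in k×. -/
/-!
Harder's degree argument. Give the basis vectors integer weights `w` with
`2 * deg β(bᵢ, bⱼ) ≤ wᵢ + wⱼ`. The Gram determinant then has degree at most `∑ w`, and its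
coefficient of `X ^ ∑ w` is the determinant of the leading form
`Λᵢⱼ = [X ^ ((wᵢ + wⱼ) / 2)] β(bᵢ, bⱼ)`; being a nonzero constant, it forces `∑ w ≥ 0`.
While `Λ` is singular, a kernel vector `c` supported on one parity class and normalised at an
index `J` of maximal weight replaces `b_J` by `∑ₐ cₐ X ^ ((w_J - wₐ) / 2) bₐ`, which lets `w_J`
drop by one. Once `Λ` is invertible, `∑ w = 0`, so some basis vector has weight `≤ 0`: its
length is a constant, hence a unit or zero, and an isotropic basis vector together with a dual
partner yields a vector of length one because `2` is invertible. Splitting off such a vector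
leaves a unimodular complement, free because `k[X]` is a PID, and induction on the rank gives the
orthogonal basis. In an orthogonal basis, unimodularity forces each `β(qᵢ, qᵢ)` to be a unit.
-/

open Polynomial Module

namespace Polynomial

variable {R : Type*} [CommSemiring R] {p q : R[X]} {a b m : ℤ}

/-- `p.DegLEHalf m` says `2 * deg p ≤ m`; for `m < 0` it forces `p = 0`. -/
def DegLEHalf (p : R[X]) (m : ℤ) : Prop :=
  ∀ n : ℕ, m < 2 * n → p.coeff n = 0

/-- The coefficient of `X ^ (m / 2)`, read as `0` unless `m` is even and nonnegative. -/
noncomputable def halfCoeff (m : ℤ) : R[X] →ₗ[R] R :=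
  if 0 ≤ m ∧ 2 ∣ m then lcoeff R (m / 2).toNat else 0

theorem halfCoeff_apply (m : ℤ) (p : R[X]) :
    halfCoeff m p = if 0 ≤ m ∧ 2 ∣ m then p.coeff (m / 2).toNat else 0 := by
  unfold halfCoeff
  split_ifs <;> rfl

theorem halfCoeff_of_not_dvd (hm : ¬ 2 ∣ m) (p : R[X]) : halfCoeff m p = 0 := by
  simp [halfCoeff_apply, hm]

theorem halfCoeff_C_mul_X_pow_mul (m : ℤ) (c : R) (e : ℕ) (q : R[X]) :
    halfCoeff (m + 2 * e) (C c * X ^ e * q) = c * halfCoeff m q := by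
  simp only [halfCoeff_apply, mul_assoc, coeff_C_mul, coeff_X_pow_mul']
  by_cases hm : 0 ≤ m ∧ 2 ∣ m
  · rw [if_pos ⟨by omega, by omega⟩, if_pos hm, if_pos (by omega),
      show ((m + 2 * e) / 2).toNat - e = (m / 2).toNat by omega]
  · by_cases hme : 0 ≤ m + 2 * e ∧ 2 ∣ m + 2 * e
    · rw [if_pos hme, if_neg hm, if_neg (by omega), mul_zero]
    · rw [if_neg hme, if_neg hm, mul_zero]

theorem halfCoeff_C (m : ℤ) (c : R) : halfCoeff m (C c) = if m = 0 then c else 0 := by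
  simp only [halfCoeff_apply, coeff_C]
  split_ifs <;> first | rfl | omega

theorem degLEHalf_of_natDegree_le {n : ℕ} (h : p.natDegree ≤ n) : p.DegLEHalf (2 * n) :=
  fun _ hk => coeff_eq_zero_of_natDegree_lt (by omega)

namespace DegLEHalf

theorem eq_zero_of_neg (h : p.DegLEHalf m) (hm : m < 0) : p = 0 :=
  ext fun n => h n (by omega)

theorem natDegree_le (h : p.DegLEHalf m) : p.natDegree ≤ (m / 2).toNat :=
  natDegree_le_iff_coeff_eq_zero.mpr fun _ hn => h _ (by omega)

theorem sub_one (h : p.DegLEHalf m) (hm : halfCoeff m p = 0) : p.DegLEHalf (m - 1) := by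
  intro n hn
  rcases lt_or_eq_of_le (show m ≤ 2 * n by omega) with hlt | rfl
  · exact h n hlt
  · simpa [halfCoeff_apply] using hm

theorem smul {S : Type*} [SMulZeroClass S R] (h : p.DegLEHalf m) (s : S) :
    (s • p).DegLEHalf m := fun n hn => by rw [coeff_smul, h n hn, smul_zero]

theorem C_mul_X_pow_mul (h : q.DegLEHalf m) (c : R) (e : ℕ) :
    (C c * X ^ e * q).DegLEHalf (m + 2 * e) := by
  intro n hn
  rw [mul_assoc, coeff_C_mul, coeff_X_pow_mul']
  split_ifs
  · rw [h _ (by omega), mul_zero]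
  · rw [mul_zero]

theorem mul (hp : p.DegLEHalf a) (hq : q.DegLEHalf b) : (p * q).DegLEHalf (a + b) := by
  intro n hn
  rw [coeff_mul]
  refine Finset.sum_eq_zero fun x hx => ?_
  rw [Finset.HasAntidiagonal.mem_antidiagonal] at hx
  rcases lt_or_ge a (2 * x.1) with h | h
  · rw [hp _ h, zero_mul]
  · rw [hq _ (by omega), mul_zero]

theorem halfCoeff_mul (hp : p.DegLEHalf a) (hq : q.DegLEHalf b) :
    halfCoeff (a + b) (p * q) = halfCoeff a p * halfCoeff b q := by
  rcases lt_or_ge a 0 with ha | ha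
  · simp [hp.eq_zero_of_neg ha]
  rcases lt_or_ge b 0 with hb | hb
  · simp [hq.eq_zero_of_neg hb]
  have hpd := hp.natDegree_le
  have hqd := hq.natDegree_le
  simp only [halfCoeff_apply]
  by_cases hae : 2 ∣ a <;> by_cases hbe : 2 ∣ b
  · rw [if_pos ⟨by omega, by omega⟩, if_pos ⟨ha, hae⟩, if_pos ⟨hb, hbe⟩,
      show ((a + b) / 2).toNat = (a / 2).toNat + (b / 2).toNat by omega]
    exact coeff_mul_add_eq_of_natDegree_le hpd hqd
  · rw [if_neg (show ¬(0 ≤ a + b ∧ 2 ∣ a + b) by omega),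
      if_neg (show ¬(0 ≤ b ∧ 2 ∣ b) by omega), mul_zero]
  · rw [if_neg (show ¬(0 ≤ a + b ∧ 2 ∣ a + b) by omega),
      if_neg (show ¬(0 ≤ a ∧ 2 ∣ a) by omega), zero_mul]
  · rw [if_pos ⟨by omega, by omega⟩, if_neg (by omega), zero_mul]
    exact coeff_eq_zero_of_natDegree_lt (natDegree_mul_le.trans_lt (by omega))

end DegLEHalf

theorem degLEHalf_sum {ι : Type*} {s : Finset ι} {f : ι → R[X]}
    (h : ∀ i ∈ s, (f i).DegLEHalf m) : (∑ i ∈ s, f i).DegLEHalf m := fun n hn => by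
  rw [finsetSum_coeff]
  exact Finset.sum_eq_zero fun i hi => h i hi n hn

theorem degLEHalf_prod {ι : Type*} {s : Finset ι} {f : ι → R[X]} {d : ι → ℤ}
    (h : ∀ i ∈ s, (f i).DegLEHalf (d i)) : (∏ i ∈ s, f i).DegLEHalf (∑ i ∈ s, d i) := by
  classical
  induction s using Finset.induction_on with
  | empty => exact degLEHalf_of_natDegree_le (n := 0) (by simp)
  | insert i s hi ih =>
    rw [Finset.prod_insert hi, Finset.sum_insert hi]
    simp only [Finset.mem_insert, forall_eq_or_imp] at h
    exact h.1.mul (ih h.2)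

theorem halfCoeff_prod {ι : Type*} {s : Finset ι} {f : ι → R[X]} {d : ι → ℤ}
    (h : ∀ i ∈ s, (f i).DegLEHalf (d i)) :
    halfCoeff (∑ i ∈ s, d i) (∏ i ∈ s, f i) = ∏ i ∈ s, halfCoeff (d i) (f i) := by
  classical
  induction s using Finset.induction_on with
  | empty => simp [halfCoeff_apply]
  | insert i s hi ih =>
    rw [Finset.prod_insert hi, Finset.sum_insert hi, Finset.prod_insert hi]
    simp only [Finset.mem_insert, forall_eq_or_imp] at h
    rw [h.1.halfCoeff_mul (degLEHalf_prod h.2), ih h.2]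

/-- The polynomial side of the reduction step `b J ↦ ∑ a, c a * X ^ ((w J - w a) / 2) • b a`. -/
theorem degLEHalf_sum_C_mul_X_pow_mul {ι : Type*} [Fintype ι] {c : ι → R} {w : ι → ℤ} {J : ι}
    (hc : ∀ a, c a ≠ 0 → 2 ∣ w J - w a ∧ w a ≤ w J) {q : ι → R[X]} {s : ℤ}
    (hq : ∀ a, (q a).DegLEHalf (s + w a)) :
    (∑ a, C (c a) * X ^ ((w J - w a) / 2).toNat * q a).DegLEHalf (s + w J) ∧
      halfCoeff (s + w J) (∑ a, C (c a) * X ^ ((w J - w a) / 2).toNat * q a) =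
        ∑ a, c a * halfCoeff (s + w a) (q a) := by
  have hterm : ∀ a, (C (c a) * X ^ ((w J - w a) / 2).toNat * q a).DegLEHalf (s + w J) ∧
      halfCoeff (s + w J) (C (c a) * X ^ ((w J - w a) / 2).toNat * q a) =
        c a * halfCoeff (s + w a) (q a) := by
    intro a
    rcases eq_or_ne (c a) 0 with hca | hca
    · simp only [hca, map_zero, zero_mul]
      exact ⟨fun n _ => coeff_zero (R := R) n, trivial⟩
    · obtain ⟨hdvd, hle⟩ := hc a hca
      rw [show s + w J = s + w a + 2 * ((w J - w a) / 2).toNat by omega]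
      exact ⟨(hq a).C_mul_X_pow_mul _ _, halfCoeff_C_mul_X_pow_mul _ _ _ _⟩
  exact ⟨degLEHalf_sum fun a _ => (hterm a).1,
    (map_sum _ _ _).trans (Finset.sum_congr rfl fun a _ => (hterm a).2)⟩

end Polynomial

namespace Matrix

variable {R : Type*} [CommRing R] {ι : Type*} [Fintype ι] [DecidableEq ι]

def IsWeightBounded (G : Matrix ι ι R[X]) (w : ι → ℤ) : Prop :=
  ∀ i j, (G i j).DegLEHalf (w i + w j)

noncomputable def leadingForm (G : Matrix ι ι R[X]) (w : ι → ℤ) : Matrix ι ι R :=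
  of fun i j => halfCoeff (w i + w j) (G i j)

omit [DecidableEq ι] in
theorem sum_perm_add_eq_two_mul (σ : Equiv.Perm ι) (w : ι → ℤ) :
    ∑ i, (w (σ i) + w i) = 2 * ∑ i, w i := by
  rw [Finset.sum_add_distrib, Equiv.sum_comp σ w]
  ring

namespace IsWeightBounded

variable {G : Matrix ι ι R[X]} {w : ι → ℤ}

theorem degLEHalf_det (hG : G.IsWeightBounded w) : G.det.DegLEHalf (2 * ∑ i, w i) := by
  rw [det_apply]
  refine degLEHalf_sum fun σ _ => DegLEHalf.smul ?_ _
  rw [← sum_perm_add_eq_two_mul σ]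
  exact degLEHalf_prod fun i _ => hG (σ i) i

theorem halfCoeff_det (hG : G.IsWeightBounded w) :
    halfCoeff (2 * ∑ i, w i) G.det = (G.leadingForm w).det := by
  rw [det_apply, det_apply, map_sum]
  refine Finset.sum_congr rfl fun σ _ => ?_
  rw [Units.smul_def, Units.smul_def, map_zsmul, ← sum_perm_add_eq_two_mul σ,
    halfCoeff_prod fun i _ => hG (σ i) i]
  rfl

theorem sum_nonneg [Nontrivial R] (hG : G.IsWeightBounded w) (hdet : IsUnit G.det) :
    0 ≤ ∑ i, w i := by
  by_contra! hneg
  rw [hG.degLEHalf_det.eq_zero_of_neg (by omega)] at hdet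
  exact not_isUnit_zero hdet

end IsWeightBounded

theorem exists_mulVec_eq_zero_of_parity {K : Type*} [Field K] {L : Matrix ι ι K} {w : ι → ℤ}
    (hL : ∀ i j, ¬ 2 ∣ w i + w j → L i j = 0) (hdet : L.det = 0) :
    ∃ (c : ι → K) (J : ι), c J = 1 ∧ L *ᵥ c = 0 ∧
      ∀ a, c a ≠ 0 → 2 ∣ w J - w a ∧ w a ≤ w J := by
  classical
  obtain ⟨c, hc0, hc⟩ := exists_mulVec_eq_zero_iff.mpr hdet
  obtain ⟨J, hJ, hmax⟩ := (Finset.univ.filter (c · ≠ 0)).exists_max_image w <| by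
    obtain ⟨i, hi⟩ := Function.ne_iff.mp hc0
    exact ⟨i, by simpa using hi⟩
  simp only [Finset.mem_filter, Finset.mem_univ, true_and] at hJ hmax
  -- keep only the parity class of `w J`, on which `L` is block diagonal
  refine ⟨fun a => if 2 ∣ w J - w a then (c J)⁻¹ * c a else 0, J, by simp [hJ], ?_,
    fun a ha => ?_⟩
  · ext i
    by_cases hi : 2 ∣ w i + w J
    · calc _ = (c J)⁻¹ * (L *ᵥ c) i := by
            simp only [mulVec, dotProduct, Finset.mul_sum]
            refine Finset.sum_congr rfl fun a _ => ?_
            split_ifs with ha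
            · ring
            · rw [hL i a (by omega), zero_mul, zero_mul, mul_zero]
        _ = 0 := by rw [hc, Pi.zero_apply, mul_zero]
    · refine Finset.sum_eq_zero fun a _ => ?_
      dsimp only
      split_ifs with ha
      · rw [hL i a (by omega), zero_mul]
      · rw [mul_zero]
  · dsimp only at ha
    split_ifs at ha with hpar
    · exact ⟨hpar, hmax a (by simpa using right_ne_zero_of_mul ha)⟩
    · exact absurd rfl ha

end Matrix

theorem Module.Basis.exists_coe_eq_update {R M ι : Type*} [CommRing R] [AddCommGroup M]
    [Module R M] [Fintype ι] [DecidableEq ι] (e : Basis ι R M) {J : ι} {x : M}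
    (hx : IsUnit (e.repr x J)) : ∃ e' : Basis ι R M, ⇑e' = Function.update e J x := by
  have hdet : IsUnit (e.det (Function.update e J x)) := by
    have hcol : ⇑(e.repr x) = fun k => ∑ i, e.repr x i • (1 : Matrix ι ι R) k i := by
      ext k
      simp [Matrix.one_apply]
    rwa [e.det_apply, e.toMatrix_update, e.toMatrix_self, hcol, Matrix.det_updateCol_sum,
      Matrix.det_one, smul_eq_mul, mul_one]
  obtain ⟨hli, hspan⟩ := e.is_basis_iff_det.mpr hdet
  exact ⟨Basis.mk hli hspan.ge, Basis.coe_mk _ _⟩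

namespace LinearMap.BilinForm

section

variable {A M : Type*} [CommRing A] [AddCommGroup M] [Module A M] {β : LinearMap.BilinForm A M}

theorem isUnit_det_toMatrix {ι : Type*} [Fintype ι] [DecidableEq ι] (hβ : Function.Bijective β)
    (b : Basis ι A M) : IsUnit (toMatrix b β).det := by
  have h := LinearEquiv.isUnit_det (LinearEquiv.ofBijective β hβ) b b.dualBasis
  have heq : LinearMap.toMatrix b b.dualBasis (LinearEquiv.ofBijective β hβ).toLinearMap =
      (toMatrix b β).transpose := by
    ext i j
    simp [LinearMap.toMatrix_apply, Basis.dualBasis_repr, toMatrix_apply]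
  rwa [heq, Matrix.det_transpose] at h

theorem exists_apply_self_eq_one_of_isotropic (h2 : IsUnit (2 : A)) (hβ : β.IsSymm)
    (hsurj : Function.Surjective β) {v : M} (hv : β v v = 0) {f : Module.Dual A M}
    (hf : f v = 1) : ∃ u, β u u = 1 := by
  obtain ⟨y, rfl⟩ := hsurj f
  obtain ⟨h, hh⟩ := h2.exists_left_inv
  have hvy : β v y = 1 := by rw [hβ.eq]; exact hf
  refine ⟨y + (h * (1 - β y y)) • v, ?_⟩
  simp only [map_add, map_smul, LinearMap.add_apply, LinearMap.smul_apply, smul_eq_mul, hv, hf,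
    hvy]
  linear_combination (1 - β y y) * hh

variable {v : M}

theorem exists_add_smul_mem_ker (hv : IsUnit (β v v)) (z : M) :
    ∃ c : A, z + c • v ∈ ker (β v) := by
  obtain ⟨u, hu⟩ := hv.exists_left_inv
  refine ⟨-(u * β v z), ?_⟩
  rw [mem_ker, map_add, map_smul, smul_eq_mul]
  linear_combination (-β v z) * hu

theorem eq_zero_of_smul_add_mem_ker (hv : IsUnit (β v v)) {c : A} {x : M} (hx : x ∈ ker (β v))
    (h : c • v + x = 0) : c = 0 := by
  have := congrArg (β v) h
  rw [map_add, map_smul, mem_ker.mp hx, add_zero, map_zero, smul_eq_mul] at this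
  exact (hv.mul_left_eq_zero).mp this

theorem bijective_restrict_ker (hβ : β.IsSymm) (hunim : Function.Bijective β)
    (hv : IsUnit (β v v)) : Function.Bijective (β.restrict (ker (β v))) := by
  constructor
  · refine (injective_iff_map_eq_zero _).mpr fun x hx => Subtype.ext <| hunim.1 ?_
    ext z
    obtain ⟨c, hc⟩ := exists_add_smul_mem_ker hv z
    have hxz := LinearMap.congr_fun hx ⟨_, hc⟩
    have hxv : β x v = 0 := by rw [hβ.eq]; exact x.2
    simpa [hxv] using hxz
  · intro f
    obtain ⟨u, hu⟩ := hv.exists_left_inv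
    let π : M →ₗ[A] ker (β v) := codRestrict _ (LinearMap.id - (u • β v).smulRight v) fun z => by
      simp only [LinearMap.sub_apply, LinearMap.id_apply, smulRight_apply, mem_ker, map_sub,
        map_smul, LinearMap.smul_apply, smul_eq_mul]
      linear_combination (-β v z) * hu
    obtain ⟨y, hy⟩ := hunim.2 (f ∘ₗ π)
    have hπv : π v = 0 := Subtype.ext <| by simp [π, hu]
    have hπN : ∀ x : ker (β v), π x = x := fun x => Subtype.ext <| by simp [π, mem_ker.mp x.2]
    have hyN : y ∈ ker (β v) := by
      rw [mem_ker, hβ.eq, hy, LinearMap.comp_apply, hπv, map_zero]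
    refine ⟨⟨y, hyN⟩, LinearMap.ext fun x => ?_⟩
    rw [restrict_apply, hy, LinearMap.domRestrict_apply, LinearMap.comp_apply, hπN]

theorem isUnit_apply_self_of_isOrthoᵢ (hsurj : Function.Surjective β) {ι : Type*}
    (q : Basis ι A M) (hq : β.IsOrthoᵢ q) (i : ι) : IsUnit (β (q i) (q i)) := by
  classical
  have hflip : β.flip (q i) = β (q i) (q i) • q.coord i := q.ext fun a => by
    rcases eq_or_ne a i with rfl | hai
    · simp
    · simp [hq hai, Finsupp.single_eq_of_ne hai.symm]
  obtain ⟨y, hy⟩ := hsurj (q.coord i)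
  have h1 : β y (q i) = β (q i) (q i) * q.coord i y := by
    simpa using LinearMap.congr_fun hflip y
  rw [hy] at h1
  simp only [Basis.coord_apply, Basis.repr_self, Finsupp.single_eq_same] at h1
  exact .of_mul_eq_one _ h1.symm

end

section

variable {R M ι : Type*} [CommRing R] [AddCommGroup M] [Module R[X] M] [DecidableEq ι]
  {β : LinearMap.BilinForm R[X] M}

theorem degLEHalf_apply_update (hβ : β.IsSymm) {b : ι → M} {w : ι → ℤ} {J : ι} {v : M}
    (hb : ∀ i j, (β (b i) (b j)).DegLEHalf (w i + w j))
    (hv : ∀ i, (β (b i) v).DegLEHalf (w i + w J - 1))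
    (hvv : (β v v).DegLEHalf (w J - 1 + (w J - 1))) (i j : ι) :
    (β (Function.update b J v i) (Function.update b J v j)).DegLEHalf
      (Function.update w J (w J - 1) i + Function.update w J (w J - 1) j) := by
  rcases eq_or_ne i J with rfl | hi
  · rcases eq_or_ne j i with rfl | hj
    · simpa using hvv
    · simp only [Function.update_self, Function.update_of_ne hj]
      rw [hβ.eq, show w i - 1 + w j = w j + w i - 1 by ring]
      exact hv j
  · rcases eq_or_ne j J with rfl | hj
    · simp only [Function.update_self, Function.update_of_ne hi]
      rw [show w i + (w j - 1) = w i + w j - 1 by ring]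
      exact hv i
    · simpa [Function.update_of_ne hi, Function.update_of_ne hj] using hb i j

end

section

variable {K M ι : Type*} [Field K] [AddCommGroup M] [Module K[X] M] [Fintype ι] [DecidableEq ι]
  {β : LinearMap.BilinForm K[X] M}

theorem exists_basis_isWeightBounded_update (hβ : β.IsSymm) (b : Basis ι K[X] M) {w : ι → ℤ}
    (hw : (toMatrix b β).IsWeightBounded w) (hdet : ((toMatrix b β).leadingForm w).det = 0) :
    ∃ (b' : Basis ι K[X] M) (J : ι),
      (toMatrix b' β).IsWeightBounded (Function.update w J (w J - 1)) := by
  obtain ⟨c, J, hcJ, hker, hc⟩ :=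
    Matrix.exists_mulVec_eq_zero_of_parity (fun _ _ h => halfCoeff_of_not_dvd h _) hdet
  set v := ∑ a, (C (c a) * X ^ ((w J - w a) / 2).toNat) • b a
  have hpair : ∀ y, β y v = ∑ a, C (c a) * X ^ ((w J - w a) / 2).toNat * β y (b a) := by
    simp [v, map_sum]
  obtain ⟨b', hb'⟩ := b.exists_coe_eq_update (J := J) (x := v) <| by
    simp only [v, b.repr_sum_self, hcJ, sub_self]
    simp
  have hw' : ∀ i j, (β (b i) (b j)).DegLEHalf (w i + w j) := by
    simpa only [Matrix.IsWeightBounded, toMatrix_apply] using hw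
  -- the leading coefficient of `β (b i) v` is the `i`-th entry of `leadingForm *ᵥ c = 0`
  have hF : ∀ i, (β (b i) v).DegLEHalf (w i + w J - 1) := by
    intro i
    obtain ⟨hdeg, hcoeff⟩ := degLEHalf_sum_C_mul_X_pow_mul hc (hw' i)
    rw [hpair]
    refine hdeg.sub_one ?_
    rw [hcoeff]
    simpa [Matrix.mulVec, dotProduct, Matrix.leadingForm, toMatrix_apply, mul_comm]
      using congrFun hker i
  -- the bound `2 * w J - 1` for `β v v` is odd, so it improves to `2 * w J - 2`
  have hFF : (β v v).DegLEHalf (w J - 1 + (w J - 1)) := by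
    have hq : ∀ a, (β v (b a)).DegLEHalf (w J - 1 + w a) := fun a => by
      rw [hβ.eq, show w J - 1 + w a = w a + w J - 1 by ring]
      exact hF a
    have := (degLEHalf_sum_C_mul_X_pow_mul hc hq).1.sub_one (halfCoeff_of_not_dvd (by omega) _)
    rw [hpair]
    convert this using 1
    ring
  refine ⟨b', J, fun i j => ?_⟩
  rw [toMatrix_apply, hb']
  exact degLEHalf_apply_update hβ hw' hF hFF i j

theorem exists_basis_isWeightBounded_det_leadingForm_ne_zero (hβ : β.IsSymm)
    (hunim : Function.Bijective β) (b : Basis ι K[X] M) {w : ι → ℤ}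
    (hw : (toMatrix b β).IsWeightBounded w) :
    ∃ (b' : Basis ι K[X] M) (w' : ι → ℤ),
      (toMatrix b' β).IsWeightBounded w' ∧ ((toMatrix b' β).leadingForm w').det ≠ 0 := by
  obtain ⟨N, hN⟩ : ∃ N : ℕ, ∑ i, w i < N := ⟨(∑ i, w i).toNat + 1, by omega⟩
  induction N generalizing b w with
  | zero =>
    have := hw.sum_nonneg (isUnit_det_toMatrix hunim b)
    omega
  | succ N ih =>
    by_cases hdet : ((toMatrix b β).leadingForm w).det = 0
    · obtain ⟨b', J, hw'⟩ := exists_basis_isWeightBounded_update hβ b hw hdet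
      refine ih b' hw' ?_
      rw [Finset.sum_update_of_mem (Finset.mem_univ J)]
      rw [Finset.sum_eq_add_sum_sdiff_singleton_of_mem (Finset.mem_univ J)] at hN
      omega
    · exact ⟨b, w, hw, hdet⟩

theorem exists_isUnit_or_eq_zero_apply_self [Nonempty ι] (hunim : Function.Bijective β)
    (b : Basis ι K[X] M) {w : ι → ℤ} (hw : (toMatrix b β).IsWeightBounded w)
    (hdet : ((toMatrix b β).leadingForm w).det ≠ 0) :
    ∃ i, IsUnit (β (b i) (b i)) ∨ β (b i) (b i) = 0 := by
  obtain ⟨δ, -, hδ⟩ := Polynomial.isUnit_iff.mp (isUnit_det_toMatrix hunim b)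
  have hsum : ∑ i, w i = 0 := by
    have := hw.halfCoeff_det
    rw [← hδ, halfCoeff_C] at this
    by_contra h
    rw [if_neg (by omega)] at this
    exact hdet this.symm
  obtain ⟨i, hi⟩ : ∃ i, w i ≤ 0 := by
    by_contra! h
    have := Finset.sum_pos (fun i _ => h i) Finset.univ_nonempty
    omega
  obtain ⟨a, ha⟩ : ∃ a, β (b i) (b i) = C a := by
    refine ⟨_, eq_C_of_natDegree_eq_zero ?_⟩
    have := (hw i i).natDegree_le
    rw [toMatrix_apply] at this
    omega
  refine ⟨i, ?_⟩
  rw [ha, isUnit_C, C_eq_zero, isUnit_iff_ne_zero]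
  exact ne_or_eq a 0

theorem exists_isUnit_apply_self [Nonempty ι] (h2 : (2 : K) ≠ 0) (hβ : β.IsSymm)
    (hunim : Function.Bijective β) (b : Basis ι K[X] M) : ∃ v, IsUnit (β v v) := by
  obtain ⟨d, hd⟩ := Finite.exists_le fun p : ι × ι => (β (b p.1) (b p.2)).natDegree
  have hw : (toMatrix b β).IsWeightBounded fun _ => (d : ℤ) := fun i j => by
    simpa only [toMatrix_apply, two_mul] using degLEHalf_of_natDegree_le (hd (i, j))
  obtain ⟨b', w', hw', hdet⟩ := exists_basis_isWeightBounded_det_leadingForm_ne_zero hβ hunim b hw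
  obtain ⟨i, hi | hi⟩ := exists_isUnit_or_eq_zero_apply_self hunim b' hw' hdet
  · exact ⟨_, hi⟩
  · have h2' : IsUnit (2 : K[X]) := by
      rw [← map_ofNat C 2]
      exact isUnit_C.mpr h2.isUnit
    obtain ⟨u, hu⟩ := exists_apply_self_eq_one_of_isotropic h2' hβ hunim.2 hi
      (f := b'.coord i) (by simp)
    exact ⟨u, hu ▸ isUnit_one⟩

theorem exists_isOrthoᵢ_basis (h2 : (2 : K) ≠ 0) {n : ℕ} (b : Basis (Fin n) K[X] M)
    (hβ : β.IsSymm) (hunim : Function.Bijective β) : ∃ q : Basis (Fin n) K[X] M, β.IsOrthoᵢ q := by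
  induction n generalizing M with
  | zero => exact ⟨b, fun i => i.elim0⟩
  | succ n ih =>
    obtain ⟨v, hv⟩ := exists_isUnit_apply_self h2 hβ hunim b
    obtain ⟨m, bN⟩ := Submodule.basisOfPid b (ker (β v))
    have hli : ∀ (c : K[X]), ∀ x ∈ ker (β v), c • v + x = 0 → c = 0 :=
      fun _ _ hx h => eq_zero_of_smul_add_mem_ker hv hx h
    have hm : m = n := by
      have h1 := finrank_eq_card_basis b
      have h2 := finrank_eq_card_basis (Basis.mkFinCons v bN hli (exists_add_smul_mem_ker hv))
      simp only [Fintype.card_fin] at h1 h2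
      omega
    subst hm
    obtain ⟨q, hq⟩ := ih bN (hβ.restrict _) (bijective_restrict_ker hβ hunim hv)
    refine ⟨Basis.mkFinCons v q hli (exists_add_smul_mem_ker hv), ?_⟩
    rw [Basis.coe_mkFinCons]
    intro i j
    refine Fin.cases ?_ (fun i => ?_) i <;> refine Fin.cases ?_ (fun j => ?_) j <;> intro hij <;>
      simp only [Function.onFun, Fin.cons_zero, Fin.cons_succ, Function.comp_apply]
    · exact (hij rfl).elim
    · exact (q j).2
    · rw [hβ.eq]
      exact (q i).2
    · exact hq (ne_of_apply_ne _ hij)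

end

end LinearMap.BilinForm

/-- **Harder/Djoković.**  Let `k` be a field of characteristic `≠ 2`, `M` a free
`k[x]`-module of finite rank `n`, and `β` a unimodular symmetric bilinear form on
`M`.  Then `M` admits a `β`-orthogonal basis, and for every orthogonal basis
`q₁,…,q_n` the values `β(qᵢ,qᵢ)` are nonzero constants in `k`. -/
theorem harder_djokovic_diagonalization
    {k : Type} [Field k] (hchar : (2 : k) ≠ 0)
    {M : Type} [AddCommGroup M] [Module (Polynomial k) M]
    (n : ℕ) (b : Module.Basis (Fin n) (Polynomial k) M)
    (β : M →ₗ[Polynomial k] M →ₗ[Polynomial k] Polynomial k)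
    (hsymm : ∀ x y, β x y = β y x)
    (hunim : Function.Bijective β) :
    (∃ q : Module.Basis (Fin n) (Polynomial k) M, ∀ i j, i ≠ j → β (q i) (q j) = 0) ∧
    (∀ q : Module.Basis (Fin n) (Polynomial k) M, (∀ i j, i ≠ j → β (q i) (q j) = 0) →
      ∀ i, ∃ u : k, u ≠ 0 ∧ β (q i) (q i) = Polynomial.C u) := by
  refine ⟨?_, fun q hq i => ?_⟩
  · obtain ⟨q, hq⟩ := LinearMap.BilinForm.exists_isOrthoᵢ_basis hchar b ⟨hsymm⟩ hunim
    exact ⟨q, fun i j hij => hq hij⟩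
  · obtain ⟨u, hu, hqi⟩ := Polynomial.isUnit_iff.mp
      (LinearMap.BilinForm.isUnit_apply_self_of_isOrthoᵢ hunim.2 q (fun i j => hq i j) i)
    exact ⟨u, hu.ne_zero, hqi.symm⟩
end

section
/- Let K be a field with a valuation v whose residue field is formally real, and let M be a nonzero symmetric n×n matrix over K with characteristic polynomial det(tI − M) = tⁿ + a_{n−1}t^{n−1} + ⋯ + a₀. Then v(M) := min over entries of v equals min over 0 ≤ i < n of v(a_i)/(n−i); in particular there exists i < n with v(a_i) = (n−i)·v(M). -/
/-!
Scale `M` by an entry `c` of largest value: `N = c⁻¹ • M` has integral entries, one of them `1`,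
and the coefficient `aᵢ` of the characteristic polynomial of `M` is `c ^ (n - i)` times that of
`N`. Hence `v aᵢ ≤ v c ^ (n - i)`, with equality exactly when the `i`-th coefficient of the
characteristic polynomial of `N` is a unit, i.e. survives in the residue field. The reduction of
`N` is a nonzero symmetric matrix over a formally real field; the diagonal entries of its square
are sums of squares, so it is not nilpotent, and its characteristic polynomial is not `Xⁿ`.
-/

open Polynomial

namespace IsFormallyReal

variable {R : Type*}

theorem eq_zero_of_mul_self_eq_zero [AddCommMonoid R] [Mul R] [IsFormallyReal R] {a : R}
    (h : a * a = 0) : a = 0 := by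
  by_contra ha
  exact not_isSumNonzeroSq_zero (h ▸ IsSumNonzeroSq.sq ha)

theorem eq_zero_of_sum_mul_self_eq_zero [NonUnitalNonAssocSemiring R] [IsFormallyReal R]
    {ι : Type*} {s : Finset ι} {x : ι → R} (h : ∑ i ∈ s, x i * x i = 0) {i : ι} (hi : i ∈ s) :
    x i = 0 := by
  classical
  rw [← Finset.add_sum_erase s _ hi] at h
  exact eq_zero_of_mul_self_eq_zero <|
    eq_zero_of_add_right (.mul_self _) (.sum_mul_self _ _) h

theorem of_not_isSumSq_neg_one {F : Type*} [Field F] (h : ¬ IsSumSq (-1 : F)) :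
    IsFormallyReal F :=
  of_eq_zero_of_eq_zero_of_mul_self_add fun {s a} hs hsum ↦ by
    by_contra ha
    refine h ?_
    have : -1 = s * (a⁻¹ * a⁻¹) := by
      field_simp
      linear_combination -hsum
    exact this ▸ hs.mul (.mul_self _)

end IsFormallyReal

namespace Matrix

variable {n R : Type*} [Fintype n]

theorem IsSymm.eq_zero_of_mul_self_eq_zero [NonUnitalNonAssocSemiring R] [IsFormallyReal R]
    {A : Matrix n n R} (hA : A.IsSymm) (h : A * A = 0) : A = 0 := by
  ext i j
  have hii : ∑ k, A i k * A i k = 0 := by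
    simpa [mul_apply, hA.apply] using congr_fun₂ h i i
  exact IsFormallyReal.eq_zero_of_sum_mul_self_eq_zero hii (Finset.mem_univ j)

theorem IsSymm.eq_zero_of_isNilpotent [CommSemiring R] [IsFormallyReal R] [DecidableEq n]
    {A : Matrix n n R} (hA : A.IsSymm) (h : IsNilpotent A) : A = 0 := by
  obtain ⟨m, hm⟩ := h
  have key : ∀ k, A ^ 2 ^ k = 0 → A = 0 := by
    intro k
    induction k with
    | zero => simp
    | succ k ih =>
      intro hk
      rw [pow_succ, pow_mul, sq] at hk
      exact ih ((hA.pow _).eq_zero_of_mul_self_eq_zero hk)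
  exact key m (pow_eq_zero_of_le Nat.lt_two_pow_self.le hm)

theorem exists_charpoly_coeff_ne_zero_of_not_isNilpotent [CommRing R] [DecidableEq n]
    {A : Matrix n n R} (h : ¬ IsNilpotent A) : ∃ i < Fintype.card n, A.charpoly.coeff i ≠ 0 := by
  cases subsingleton_or_nontrivial R
  · exact (h ⟨1, Subsingleton.elim _ _⟩).elim
  by_contra! hcoeff
  refine h ⟨Fintype.card n, ?_⟩
  have hX : A.charpoly = X ^ Fintype.card n := by
    rw [A.charpoly_monic.as_sum, charpoly_natDegree_eq_dim]
    simp only [add_eq_left]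
    exact Finset.sum_eq_zero fun i hi ↦ by rw [hcoeff i (Finset.mem_range.mp hi), C_0, zero_mul]
  simpa [hX] using A.aeval_self_charpoly

/-- The coefficient of `X ^ (card n - k)` is a signed sum of `k × k` principal minors, each
homogeneous of degree `k` in the entries. -/
theorem charpoly_smul [CommRing R] [DecidableEq n] (c : R) (A : Matrix n n R) :
    (c • A).charpoly = A.charpoly.scaleRoots c := by
  nontriviality R
  ext i
  rw [coeff_scaleRoots, charpoly_natDegree_eq_dim]
  rcases le_or_gt i (Fintype.card n) with hi | hi
  · obtain ⟨k, hk, rfl⟩ : ∃ k ≤ Fintype.card n, i = Fintype.card n - k :=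
      ⟨Fintype.card n - i, Nat.sub_le _ _, by omega⟩
    rw [charpoly_coeff_eq_sum_minors _ _ hk, charpoly_coeff_eq_sum_minors _ _ hk,
      Nat.sub_sub_self hk, mul_assoc, Finset.sum_mul]
    congr 1
    refine Finset.sum_congr rfl fun s hs ↦ ?_
    rw [show (c • A).submatrix (Subtype.val : s → n) Subtype.val = c • A.submatrix _ _ from rfl,
      det_smul, Fintype.card_coe, (Finset.mem_powersetCard.mp hs).2, mul_comm]
  · rw [coeff_eq_zero_of_natDegree_lt, coeff_eq_zero_of_natDegree_lt, zero_mul] <;>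
      simpa [charpoly_natDegree_eq_dim]

theorem charpoly_coeff_smul_map {S : Type*} [CommRing R] [CommRing S] [DecidableEq n]
    (f : R →+* S) (c : S) (N : Matrix n n R) (i : ℕ) :
    (c • N.map f).charpoly.coeff i = f (N.charpoly.coeff i) * c ^ (Fintype.card n - i) := by
  nontriviality S
  rw [charpoly_smul, coeff_scaleRoots, charpoly_natDegree_eq_dim, charpoly_map, coeff_map]

theorem IsSymm.exists_isUnit_charpoly_coeff {O : Type*} [CommRing O] [IsLocalRing O]
    [IsFormallyReal (IsLocalRing.ResidueField O)] [DecidableEq n] {N : Matrix n n O}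
    (hN : N.IsSymm) (h0 : N.map (IsLocalRing.residue O) ≠ 0) :
    ∃ i < Fintype.card n, IsUnit (N.charpoly.coeff i) := by
  obtain ⟨i, hi, hne⟩ := exists_charpoly_coeff_ne_zero_of_not_isNilpotent
    (mt (hN.map _).eq_zero_of_isNilpotent h0)
  rw [charpoly_map, coeff_map, IsLocalRing.residue_ne_zero_iff_isUnit] at hne
  exact ⟨i, hi, hne⟩

end Matrix

theorem Valuation.exists_ne_zero_forall_le {K Γ₀ ι : Type*} [Field K]
    [LinearOrderedCommGroupWithZero Γ₀] [Finite ι] (v : Valuation K Γ₀) {f : ι → K} (hf : f ≠ 0) :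
    ∃ i, f i ≠ 0 ∧ ∀ j, v (f j) ≤ v (f i) := by
  obtain ⟨j, hj⟩ := Function.ne_iff.mp hf
  have : Nonempty ι := ⟨j⟩
  obtain ⟨i, hi⟩ := Finite.exists_max fun j ↦ v (f j)
  refine ⟨i, fun h ↦ hj (v.zero_iff.mp (le_antisymm ?_ zero_le)), hi⟩
  simpa [h] using hi j

open Matrix

/-- **Values of symmetric matrices under real valuations.**  Let `v` be a
valuation (written multiplicatively) on a field `K` with formally real residue
field, and `M` a nonzero symmetric `n×n` matrix over `K` with characteristic
polynomial `tⁿ + a_{n-1}t^{n-1} + ⋯ + a₀`.  Then the maximal value `v(M)` of the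
entries of `M` satisfies `v(aᵢ) ≤ v(M)^(n-i)` for all `i < n`, with equality for
some `i < n` (multiplicative form of
`v(M) = min_{0 ≤ i < n} v(aᵢ)/(n-i)`). -/
theorem valuation_of_symmetric_matrix_eq_min_of_charpoly
    {K Γ₀ : Type} [Field K] [LinearOrderedCommGroupWithZero Γ₀]
    (v : Valuation K Γ₀)
    (hres : ¬ IsSumSq (-1 : IsLocalRing.ResidueField v.valuationSubring))
    {n : ℕ} (M : Matrix (Fin n) (Fin n) K) (hsymm : M.IsSymm) (hM : M ≠ 0) :
    ∃ p : Fin n × Fin n,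
      (∀ q : Fin n × Fin n, v (M q.1 q.2) ≤ v (M p.1 p.2)) ∧
      (∀ i : Fin n, v (M.charpoly.coeff i) ≤ v (M p.1 p.2) ^ (n - (i : ℕ))) ∧
      ∃ i : Fin n, v (M.charpoly.coeff i) = v (M p.1 p.2) ^ (n - (i : ℕ)) := by
  have := IsFormallyReal.of_not_isSumSq_neg_one hres
  obtain ⟨p, hc, hp⟩ := v.exists_ne_zero_forall_le (f := fun q : Fin n × Fin n ↦ M q.1 q.2)
    fun h ↦ hM (Matrix.ext fun i j ↦ congr_fun h (i, j))
  set c := M p.1 p.2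
  let N : Matrix (Fin n) (Fin n) v.valuationSubring := fun i j ↦
    ⟨c⁻¹ * M i j, by
      rw [Valuation.mem_valuationSubring_iff, map_mul, map_inv₀]
      exact inv_mul_le_one_of_le₀ (hp (i, j)) zero_le⟩
  have hv (i : ℕ) : v (M.charpoly.coeff i) =
      v (algebraMap _ K (N.charpoly.coeff i)) * v c ^ (n - i) := by
    have hMN : M = c • N.map (algebraMap v.valuationSubring K) :=
      Matrix.ext fun i j ↦ (mul_inv_cancel_left₀ hc _).symm
    rw [hMN, charpoly_coeff_smul_map, Fintype.card_fin, map_mul, map_pow]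
  have hN : N.IsSymm := IsSymm.ext fun i j ↦ Subtype.ext (by simp [N, hsymm.apply])
  have hN0 : N.map (IsLocalRing.residue _) ≠ 0 := fun h ↦ by
    have hNp : N p.1 p.2 = 1 := Subtype.ext (inv_mul_cancel₀ hc)
    simpa [hNp] using congr_fun₂ h p.1 p.2
  have hint := Valuation.valuationSubring.integers v
  refine ⟨p, hp, fun i ↦ ?_, ?_⟩
  · rw [hv]
    exact mul_le_of_le_one_left' (hint.map_le_one _)
  · obtain ⟨i, hi, hunit⟩ := hN.exists_isUnit_charpoly_coeff hN0
    refine ⟨⟨i, by simpa using hi⟩, ?_⟩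
    rw [hv, hint.one_of_isUnit hunit, one_mul]
end
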